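/- Let {φ_ε} be a family of mollifiers, X ⊂ R^n closed with positive Lebesgue measure, p ∈ C¹(X) positive with finite positive integral, and let E_ε and E be the mollified interaction energy and the limit functional E(μ) = ∫_X q²/p (for μ with density q absolutely continuous w.r.t. μ*, +∞ otherwise). Then the recovery-sequence half of Γ-convergence holds: for every probability measure μ on R^n, limsup_{ε→0} E_ε(μ) ≤ E(μ) (taking the constant sequence μ_ε = μ). -/

import Mathlib

open MeasureTheory Filter
open scoped ENNReal

/-- A family of mollifiers in the sense of the paper: nonnegative, even, unit `L¹` mass,
bounded, with mass outside any fixed ball vanishing in `L¹` and `L^∞` as `ε → 0`. -/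
def IsMollifierFamily {n : ℕ} (φ : ℝ → EuclideanSpace ℝ (Fin n) → ℝ) : Prop :=
  (∀ ε : ℝ, 0 < ε →
    Continuous (φ ε) ∧ (∀ x, 0 ≤ φ ε x) ∧ (∀ x, φ ε (-x) = φ ε x) ∧
      (∫ x, φ ε x) = 1 ∧ ∃ C : ℝ, ∀ x, φ ε x ≤ C) ∧
  ∀ δ : ℝ, 0 < δ →
    Tendsto (fun ε => ∫ x in (Metric.ball (0 : EuclideanSpace ℝ (Fin n)) δ)ᶜ, φ ε x)
        (nhdsWithin 0 (Set.Ioi 0)) (nhds 0) ∧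
    Tendsto (fun ε => eLpNorm
          (((Metric.ball (0 : EuclideanSpace ℝ (Fin n)) δ)ᶜ).indicator (φ ε)) ⊤ volume)
        (nhdsWithin 0 (Set.Ioi 0)) (nhds 0)

/-!
If `μ = q · Lebesgue` is supported in `X`, AM-GM gives
`q x * q y * (p x * p y) ^ (-1/2) ≤ (q x ^ 2 / p x + q y ^ 2 / p y) / 2`.
Integrating this against the unit-mass kernel `φ_ε (x - y)` and using translation invariance
of Lebesgue measure in each variable yields `E_ε(μ) ≤ ∫_X q ^ 2 / p` for every `ε > 0`,
so the `limsup` bound needs no passage to the limit at all.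
-/

theorem mul_mul_rpow_neg_half_le (a b : ℝ) {P Q : ℝ} (hP : 0 < P) (hQ : 0 < Q) :
    a * b * (P * Q) ^ (-(1:ℝ)/2) ≤ (a ^ 2 / P + b ^ 2 / Q) / 2 := by
  obtain ⟨s, hs, rfl⟩ : ∃ s, 0 < s ∧ s ^ 2 = P := ⟨√P, Real.sqrt_pos.2 hP, Real.sq_sqrt hP.le⟩
  obtain ⟨t, ht, rfl⟩ : ∃ t, 0 < t ∧ t ^ 2 = Q := ⟨√Q, Real.sqrt_pos.2 hQ, Real.sq_sqrt hQ.le⟩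
  have hst : (s ^ 2 * t ^ 2) ^ (-(1:ℝ)/2) = (s * t)⁻¹ := by
    rw [← mul_pow, neg_div, Real.rpow_neg (by positivity), ← Real.sqrt_eq_rpow,
      Real.sqrt_sq (by positivity)]
  rw [hst, div_add_div _ _ (by positivity) (by positivity), div_div, ← div_eq_mul_inv,
    div_le_div_iff₀ (by positivity) (by positivity)]
  nlinarith [sq_nonneg (a * t - b * s), mul_pos hs ht]

theorem ENNReal.mul_mul_ofReal_mul_rpow_neg_half_le {a b : ℝ≥0∞} (ha : a ≠ ∞) (hb : b ≠ ∞)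
    {κ P Q : ℝ} (hκ : 0 ≤ κ) (hP : 0 < P) (hQ : 0 < Q) :
    a * (b * ENNReal.ofReal (κ * (P * Q) ^ (-(1:ℝ)/2))) ≤
      ENNReal.ofReal κ *
        (ENNReal.ofReal (a.toReal ^ 2 / P) / 2 + ENNReal.ofReal (b.toReal ^ 2 / Q) / 2) := by
  rw [← ENNReal.ofReal_toReal ha, ← ENNReal.ofReal_toReal hb, ← ENNReal.add_div,
    ← ENNReal.ofReal_add (by positivity) (by positivity), ← ENNReal.ofReal_ofNat 2,
    ← ENNReal.ofReal_div_of_pos two_pos, ← ENNReal.ofReal_mul hκ,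
    ← ENNReal.ofReal_mul (by positivity), ← ENNReal.ofReal_mul (by positivity)]
  refine ENNReal.ofReal_le_ofReal ?_
  simp only [ENNReal.toReal_ofReal ENNReal.toReal_nonneg]
  calc a.toReal * (b.toReal * (κ * (P * Q) ^ (-(1:ℝ)/2)))
      = κ * (a.toReal * b.toReal * (P * Q) ^ (-(1:ℝ)/2)) := by ring
    _ ≤ κ * ((a.toReal ^ 2 / P + b.toReal ^ 2 / Q) / 2) :=
      mul_le_mul_of_nonneg_left (mul_mul_rpow_neg_half_le _ _ hP hQ) hκ

theorem lintegral_lintegral_sub_mul_add {G : Type*} [AddCommGroup G] [MeasurableSpace G]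
    [MeasurableAdd₂ G] [MeasurableNeg G] (μ : Measure G) [SFinite μ] [μ.IsAddLeftInvariant]
    [μ.IsNegInvariant] {k : G → ℝ≥0∞} (hk : Measurable k) (hk_one : ∫⁻ z, k z ∂μ = 1)
    {f : G → ℝ≥0∞} (hf : AEMeasurable f μ) :
    ∫⁻ x, ∫⁻ y, k (x - y) * (f x + f y) ∂μ ∂μ = ∫⁻ x, f x ∂μ + ∫⁻ x, f x ∂μ := by
  have hk_left (x : G) : ∫⁻ y, k (x - y) ∂μ = 1 := (lintegral_sub_left_eq_self k x).trans hk_one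
  have hk_right (y : G) : ∫⁻ x, k (x - y) ∂μ = 1 :=
    (lintegral_sub_right_eq_self k y).trans hk_one
  have hk_sub_left (x : G) : Measurable fun y => k (x - y) := by fun_prop
  have hk_sub_right (y : G) : Measurable fun x => k (x - y) := by fun_prop
  have hswap : ∫⁻ x, ∫⁻ y, k (x - y) * f y ∂μ ∂μ = ∫⁻ y, ∫⁻ x, k (x - y) * f y ∂μ ∂μ :=
    lintegral_lintegral_swap <| (hk.comp measurable_sub).aemeasurable.mul
      (hf.comp_quasiMeasurePreserving Measure.quasiMeasurePreserving_snd)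
  calc ∫⁻ x, ∫⁻ y, k (x - y) * (f x + f y) ∂μ ∂μ
      = ∫⁻ x, (f x + ∫⁻ y, k (x - y) * f y ∂μ) ∂μ := by
        refine lintegral_congr fun x => ?_
        simp_rw [mul_add]
        rw [lintegral_add_left ((hk_sub_left x).mul_const _),
          lintegral_mul_const _ (hk_sub_left x), hk_left, one_mul]
    _ = ∫⁻ x, f x ∂μ + ∫⁻ y, ∫⁻ x, k (x - y) * f y ∂μ ∂μ := by
        rw [lintegral_add_left' hf, hswap]
    _ = ∫⁻ x, f x ∂μ + ∫⁻ x, f x ∂μ := by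
        congr 1
        refine lintegral_congr fun y => ?_
        rw [lintegral_mul_const _ (hk_sub_right y), hk_right, one_mul]

theorem lintegral_lintegral_withDensity {α : Type*} [MeasurableSpace α] (μ : Measure α)
    {q : α → ℝ≥0∞} (hq : Measurable q) (hq_fin : ∀ᵐ x ∂μ, q x < ∞) (F : α → α → ℝ≥0∞) :
    ∫⁻ x, ∫⁻ y, F x y ∂μ.withDensity q ∂μ.withDensity q =
      ∫⁻ x, ∫⁻ y, q x * (q y * F x y) ∂μ ∂μ := by
  rw [lintegral_withDensity_eq_lintegral_mul_non_measurable _ hq hq_fin]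
  refine lintegral_congr_ae ?_
  filter_upwards [hq_fin] with x hx
  rw [Pi.mul_apply, lintegral_withDensity_eq_lintegral_mul_non_measurable _ hq hq_fin,
    ← lintegral_const_mul' _ _ hx.ne]
  rfl

theorem Measure.ae_rnDeriv_eq_zero_of_notMem {α : Type*} [MeasurableSpace α]
    {μ ν : Measure α} [μ.HaveLebesgueDecomposition ν] {s : Set α} (hs : MeasurableSet s)
    (hμ : μ ≪ ν.restrict s) : ∀ᵐ x ∂ν, x ∉ s → μ.rnDeriv ν x = 0 := by
  have hμν : μ ≪ ν := hμ.trans Measure.restrict_le_self.absolutelyContinuous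
  have hμs : μ sᶜ = 0 := hμ (by simp [Measure.restrict_apply hs.compl])
  refine (setLIntegral_eq_zero_iff hs.compl (Measure.measurable_rnDeriv μ ν)).1 ?_
  rw [Measure.setLIntegral_rnDeriv' hμν hs.compl, hμs]

theorem withDensity_absolutelyContinuous_restrict {α : Type*} [MeasurableSpace α]
    (μ : Measure α) {s : Set α} (hs : MeasurableSet s) {f : α → ℝ≥0∞}
    (hf : ∀ x ∉ s, f x = 0) : μ.withDensity f ≪ μ.restrict s := by
  have : s.indicator f = f := Set.indicator_eq_self.2 fun x hx => by_contra fun h => hx (hf x h)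
  rw [← this, withDensity_indicator hs]
  exact withDensity_absolutelyContinuous _ _

open scoped Classical in
/-- The paper's `W_ε` for the kernel `κ = φ ε`. -/
noncomputable def interactionKernel {G : Type*} [Sub G] (X : Set G) (p κ : G → ℝ) (x y : G) :
    ℝ≥0∞ :=
  if x ∈ X ∧ y ∈ X then ENNReal.ofReal (κ (x - y) * (p x * p y) ^ (-(1:ℝ)/2)) else ⊤

theorem lintegral_lintegral_interactionKernel_le {G : Type*} [AddCommGroup G]
    [MeasurableSpace G] [MeasurableAdd₂ G] [MeasurableNeg G]
    (ν : Measure G) [SigmaFinite ν] [ν.IsAddLeftInvariant] [ν.IsNegInvariant]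
    (μ : Measure G) [SigmaFinite μ] {X : Set G} (hX : MeasurableSet X) (hμ : μ ≪ ν.restrict X)
    {p : G → ℝ} (hp : AEMeasurable p (ν.restrict X)) (hp_pos : ∀ x ∈ X, 0 < p x)
    {κ : G → ℝ} (hκ : Measurable κ) (hκ_nonneg : ∀ z, 0 ≤ κ z)
    (hκ_one : ∫⁻ z, ENNReal.ofReal (κ z) ∂ν = 1) :
    ∫⁻ x, ∫⁻ y, interactionKernel X p κ x y ∂μ ∂μ ≤
      ∫⁻ x in X, ENNReal.ofReal ((μ.rnDeriv ν x).toReal ^ 2 / p x) ∂ν := by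
  set q := μ.rnDeriv ν
  have hq : Measurable q := Measure.measurable_rnDeriv μ ν
  set f : G → ℝ≥0∞ := X.indicator fun z => ENNReal.ofReal ((q z).toReal ^ 2 / p z) / 2
  have hf : AEMeasurable f ν := (aemeasurable_indicator_iff hX).2 <|
    (ENNReal.measurable_ofReal.comp_aemeasurable
      ((hq.ennreal_toReal.pow_const 2).aemeasurable.div hp)).div_const 2
  have hq_fin : ∀ᵐ x ∂ν, q x < ∞ := μ.rnDeriv_lt_top ν
  have hq_zero : ∀ᵐ x ∂ν, x ∉ X → q x = 0 := Measure.ae_rnDeriv_eq_zero_of_notMem hX hμ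
  have hpointwise : ∀ᵐ x ∂ν, ∀ᵐ y ∂ν,
      q x * (q y * interactionKernel X p κ x y) ≤ ENNReal.ofReal (κ (x - y)) * (f x + f y) := by
    filter_upwards [hq_fin, hq_zero] with x hx_fin hx_zero
    filter_upwards [hq_fin, hq_zero] with y hy_fin hy_zero
    by_cases hxy : x ∈ X ∧ y ∈ X
    · simp only [interactionKernel, if_pos hxy, f, Set.indicator_of_mem hxy.1,
        Set.indicator_of_mem hxy.2]
      exact ENNReal.mul_mul_ofReal_mul_rpow_neg_half_le hx_fin.ne hy_fin.ne (hκ_nonneg _)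
        (hp_pos x hxy.1) (hp_pos y hxy.2)
    -- the kernel is `⊤` off `X × X`, but there a density vanishes and `0 * ⊤ = 0`
    · rcases not_and_or.1 hxy with hx | hy
      · simp [hx_zero hx]
      · simp [hy_zero hy]
  calc ∫⁻ x, ∫⁻ y, interactionKernel X p κ x y ∂μ ∂μ
      = ∫⁻ x, ∫⁻ y, q x * (q y * interactionKernel X p κ x y) ∂ν ∂ν := by
        conv_lhs => rw [← Measure.withDensity_rnDeriv_eq μ ν
          (hμ.trans Measure.restrict_le_self.absolutelyContinuous)]
        exact lintegral_lintegral_withDensity ν hq hq_fin _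
    _ ≤ ∫⁻ x, ∫⁻ y, ENNReal.ofReal (κ (x - y)) * (f x + f y) ∂ν ∂ν :=
        lintegral_mono_ae (hpointwise.mono fun x hx => lintegral_mono_ae hx)
    _ = ∫⁻ x, f x ∂ν + ∫⁻ x, f x ∂ν :=
        lintegral_lintegral_sub_mul_add ν (ENNReal.measurable_ofReal.comp hκ) hκ_one hf
    _ = ∫⁻ x in X, ENNReal.ofReal ((q x).toReal ^ 2 / p x) ∂ν := by
        rw [← lintegral_add_left' hf, ← lintegral_indicator hX]
        refine lintegral_congr fun x => ?_
        by_cases hx : x ∈ X <;> simp [f, hx]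

open scoped Classical in
theorem stmt_17_general {n : ℕ} (X : Set (EuclideanSpace ℝ (Fin n))) (hXc : IsClosed X)
    (p : EuclideanSpace ℝ (Fin n) → ℝ) (hpc : ContinuousOn p X)
    (hppos : ∀ x ∈ X, 0 < p x)
    (φ : ℝ → EuclideanSpace ℝ (Fin n) → ℝ) (hφ : IsMollifierFamily φ)
    (μstar : Measure (EuclideanSpace ℝ (Fin n)))
    (hμstar : μstar =
      volume.withDensity fun x => ENNReal.ofReal (X.indicator p x / ∫ x in X, p x))
    (μ : Measure (EuclideanSpace ℝ (Fin n))) (hprob : IsProbabilityMeasure μ) :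
    Filter.limsup
      (fun ε => ∫⁻ x, ∫⁻ y, (if x ∈ X ∧ y ∈ X then
          ENNReal.ofReal (φ ε (x - y) * (p x * p y) ^ (-(1:ℝ)/2)) else ⊤) ∂μ ∂μ)
      (nhdsWithin 0 (Set.Ioi 0)) ≤
    (if μ ≪ μstar then
        ∫⁻ x in X, ENNReal.ofReal (((μ.rnDeriv volume x).toReal) ^ 2 / p x)
      else ⊤) := by
  split_ifs with hac
  swap
  · exact le_top
  have hX := hXc.measurableSet
  have hμ : μ ≪ volume.restrict X := hac.trans <| hμstar ▸
    withDensity_absolutelyContinuous_restrict volume hX fun x hx => by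
      simp [Set.indicator_of_notMem hx]
  refine limsup_le_of_le (by isBoundedDefault) (eventually_nhdsWithin_of_forall fun ε hε => ?_)
  obtain ⟨hφ_cont, hφ_nonneg, -, hφ_one, -⟩ := hφ.1 ε hε
  have hφ_lintegral : ∫⁻ z, ENNReal.ofReal (φ ε z) = 1 := by
    rw [← ofReal_integral_eq_lintegral_ofReal (Integrable.of_integral_ne_zero (by simp [hφ_one]))
      (ae_of_all _ hφ_nonneg), hφ_one, ENNReal.ofReal_one]
  exact lintegral_lintegral_interactionKernel_le volume μ hX hμ (hpc.aemeasurable hX) hppos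
    hφ_cont.measurable hφ_nonneg hφ_lintegral

open scoped Classical in
theorem stmt_17 {n : ℕ} (X : Set (EuclideanSpace ℝ (Fin n))) (hXc : IsClosed X)
    (hXpos : 0 < volume X)
    (p : EuclideanSpace ℝ (Fin n) → ℝ) (hpc : ContinuousOn p X)
    (hppos : ∀ x ∈ X, 0 < p x)
    (hpint : IntegrableOn p X volume) (hpintpos : 0 < ∫ x in X, p x)
    (φ : ℝ → EuclideanSpace ℝ (Fin n) → ℝ) (hφ : IsMollifierFamily φ)
    (μstar : Measure (EuclideanSpace ℝ (Fin n)))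
    (hμstar : μstar =
      volume.withDensity fun x => ENNReal.ofReal (X.indicator p x / ∫ x in X, p x))
    (μ : Measure (EuclideanSpace ℝ (Fin n))) (hprob : IsProbabilityMeasure μ) :
    Filter.limsup
      (fun ε => ∫⁻ x, ∫⁻ y, (if x ∈ X ∧ y ∈ X then
          ENNReal.ofReal (φ ε (x - y) * (p x * p y) ^ (-(1:ℝ)/2)) else ⊤) ∂μ ∂μ)
      (nhdsWithin 0 (Set.Ioi 0)) ≤
    (if μ ≪ μstar then
        ∫⁻ x in X, ENNReal.ofReal (((μ.rnDeriv volume x).toReal) ^ 2 / p x)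
      else ⊤) :=
  stmt_17_general X hXc p hpc hppos φ hφ μstar hμstar μ hprob
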